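/- Let d and k be positive integers and let α ≥ 0 be a real number. Let G be a finite simple graph with Δ(G) ≤ d, and let u be a vertex of G of degree p with 1 ≤ p ≤ k−1 such that at most (1+α)k − p neighbors of u have degree at least d−k+2 in G. If G − u admits an incidence (d + ⌊(1+α)k⌋ − 1, ⌊(1+α)k⌋ − 1)-coloring, then G admits an incidence (d + ⌊(1+α)k⌋ − 1, ⌊(1+α)k⌋ − 1)-coloring. -/

import Mathlib

/-!
Write `K = ⌊(1 + α)k⌋`. The coloring of `G - u` is kept and only the `2p` incidences at `u` are
colored. The color of `(u, uv)` must avoid the colors on the incidences `(v, vy)` and, when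
`K - 1` colors already enter `v`, must be one of them. The color of `(v, vu)` must avoid every
color at `v` and every color on an incidence `(u, uw)`. First reserve a color for `(v, vu)` at
each of the at most `K - p` neighbours `v` of high degree. Then every neighbour keeps at least
`p - 1` admissible colors for `(u, uv)`, and a high-degree neighbour keeps `p`, so Hall's theorem
makes the colors of the `(u, uv)` distinct. At a low-degree neighbour `v` at most
`(K - 1) + (d - p) + (p - 1)` of the `d + K - 1` colors are excluded, so `(v, vu)` can still be
colored.
-/

open SimpleGraph

/-- An incidence coloring of `G` with `n` colors, where `φ v u` is the color of the
incidence `(v, vu)` (meaningful when `G.Adj v u`): two distinct adjacent incidences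
`(v, vu)` and `(w, wx)` receive distinct colors. Incidences `(v, e)` and `(w, f)` are
adjacent if `v = w`, or `e = f`, or the edge `vw` equals `e` or `f`. -/
def IsIncidenceColoring {V : Type*} (G : SimpleGraph V) {n : ℕ} (φ : V → V → Fin n) : Prop :=
  ∀ ⦃v u w x : V⦄, G.Adj v u → G.Adj w x → (v, u) ≠ (w, x) →
    (v = w ∨ s(v, u) = s(w, x) ∨ s(v, w) = s(v, u) ∨ s(v, w) = s(w, x)) →
    φ v u ≠ φ w x

/-- `G` admits an incidence `(n, ℓ)`-coloring: an incidence coloring with `n` colors such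
that for every vertex `v`, at most `ℓ` distinct colors appear on the incidences of the
form `(u, uv)` where `u` ranges over the neighbors of `v`. -/
def HasIncidenceColoring {V : Type*} (G : SimpleGraph V) (n ℓ : ℕ) : Prop :=
  ∃ φ : V → V → Fin n, IsIncidenceColoring G φ ∧
    ∀ v : V, ({c : Fin n | ∃ u : V, G.Adj u v ∧ φ u v = c}).ncard ≤ ℓ

/-- The incidence chromatic number: the least `n` such that `G` admits an incidence
`n`-coloring. -/
noncomputable def incChromaticNumber {V : Type*} (G : SimpleGraph V) : ℕ :=
  sInf {n : ℕ | ∃ φ : V → V → Fin n, IsIncidenceColoring G φ}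

/-- `mad(G) < q`: every nonempty subgraph `H` of `G` satisfies `2|E(H)| < q·|V(H)|`. -/
def MadLT {V : Type*} (G : SimpleGraph V) (q : ℝ) : Prop :=
  ∀ H : G.Subgraph, H.verts.Nonempty →
    (2 * H.edgeSet.ncard : ℝ) < q * H.verts.ncard

open Finset

section Colors

variable {V β : Type*}

def inColors (G : SimpleGraph V) (φ : V → V → β) (v : V) : Set β :=
  (φ · v) '' {w | G.Adj w v}

def outColors (G : SimpleGraph V) (φ : V → V → β) (v : V) : Set β :=
  φ v '' G.neighborSet v

end Colors

section IncidenceColoring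

variable {V : Type*} {n : ℕ} {G : SimpleGraph V}

theorem isIncidenceColoring_iff {φ : V → V → Fin n} :
    IsIncidenceColoring G φ ↔
      (∀ ⦃v a b⦄, G.Adj v a → G.Adj v b → a ≠ b → φ v a ≠ φ v b) ∧
      ∀ ⦃v a b⦄, G.Adj v a → G.Adj a b → φ v a ≠ φ a b := by
  refine ⟨fun h => ⟨fun v a b ha hb hab => h ha hb (by simpa using hab) (Or.inl rfl),
    fun v a b ha hb => h ha hb (by simp [ha.ne]) (Or.inr (Or.inr (Or.inl rfl)))⟩, ?_⟩
  rintro ⟨hstar, hpath⟩ v a w b ha hb hne hadj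
  rcases hadj with rfl | h | h | h
  · exact hstar ha hb (by simpa using hne)
  · obtain ⟨rfl, rfl⟩ | ⟨rfl, rfl⟩ := Sym2.eq_iff.mp h
    · exact absurd rfl hne
    · exact hpath ha hb
  · obtain ⟨-, rfl⟩ | ⟨rfl, -⟩ := Sym2.eq_iff.mp h
    · exact hpath ha hb
    · exact (G.irrefl ha).elim
  · obtain ⟨-, rfl⟩ | ⟨rfl, -⟩ := Sym2.eq_iff.mp h
    · exact (G.irrefl hb).elim
    · exact (hpath hb ha).symm

theorem IsIncidenceColoring.disjoint_inColors_outColors {φ : V → V → Fin n}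
    (hφ : IsIncidenceColoring G φ) (v : V) : Disjoint (inColors G φ v) (outColors G φ v) := by
  rw [Set.disjoint_left]
  rintro _ ⟨w, hw, rfl⟩ ⟨x, hx, hwx⟩
  exact (isIncidenceColoring_iff.mp hφ).2 hw hx hwx.symm

theorem HasIncidenceColoring.deleteIncidenceSet {u : V} {ℓ : ℕ}
    (h : HasIncidenceColoring (G.induce {u}ᶜ) n ℓ) (hn : 0 < n) :
    HasIncidenceColoring (G.deleteIncidenceSet u) n ℓ := by
  classical
  obtain ⟨φ, hφ, hℓ⟩ := h
  rw [isIncidenceColoring_iff] at hφ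
  let ψ : V → V → Fin n := fun a b =>
    if h : a ≠ u ∧ b ≠ u then φ ⟨a, h.1⟩ ⟨b, h.2⟩ else ⟨0, hn⟩
  have hψ {a b : V} (ha : a ≠ u) (hb : b ≠ u) : ψ a b = φ ⟨a, ha⟩ ⟨b, hb⟩ :=
    dif_pos ⟨ha, hb⟩
  refine ⟨ψ, isIncidenceColoring_iff.mpr ⟨fun v a b ha hb hab => ?_, fun v a b ha hb => ?_⟩,
    fun v => ?_⟩
  · rw [deleteIncidenceSet_adj] at ha hb
    rw [hψ ha.2.1 ha.2.2, hψ ha.2.1 hb.2.2]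
    exact hφ.1 ha.1 hb.1 fun h => hab (congrArg Subtype.val h)
  · rw [deleteIncidenceSet_adj] at ha hb
    rw [hψ ha.2.1 ha.2.2, hψ hb.2.1 hb.2.2]
    exact hφ.2 ha.1 hb.1
  · change (inColors (G.deleteIncidenceSet u) ψ v).ncard ≤ ℓ
    by_cases hv : v = u
    · have : inColors (G.deleteIncidenceSet u) ψ v = ∅ := by
        ext c; simp [inColors, deleteIncidenceSet_adj, hv]
      simp [this]
    refine (Set.ncard_le_ncard ?_).trans (hℓ ⟨v, hv⟩)
    rintro _ ⟨w, hw, rfl⟩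
    replace hw := deleteIncidenceSet_adj.mp hw
    exact ⟨⟨w, hw.2.1⟩, hw.1, (hψ hw.2.1 hv).symm⟩

theorem ncard_neighborSet_eq_degree [Fintype V] [DecidableRel G.Adj] (v : V) :
    (G.neighborSet v).ncard = G.degree v := by
  rw [Set.ncard_eq_toFinset_card', ← neighborFinset_def, card_neighborFinset_eq_degree]

theorem ncard_outColors_deleteIncidenceSet_lt [Fintype V] [DecidableRel G.Adj] {β : Type*}
    (ψ : V → V → β) {u v : V} (h : G.Adj u v) :
    (outColors (G.deleteIncidenceSet u) ψ v).ncard < G.degree v := by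
  have hsub : (G.deleteIncidenceSet u).neighborSet v ⊂ G.neighborSet v :=
    Set.ssubset_iff_of_subset (fun w hw => (deleteIncidenceSet_le G u) hw) |>.mpr
      ⟨u, h.symm, fun hu => (deleteIncidenceSet_adj.mp hu).2.2 rfl⟩
  calc (outColors (G.deleteIncidenceSet u) ψ v).ncard
      ≤ ((G.deleteIncidenceSet u).neighborSet v).ncard := Set.ncard_image_le
    _ < (G.neighborSet v).ncard := Set.ncard_lt_ncard hsub
    _ = G.degree v := ncard_neighborSet_eq_degree v

end IncidenceColoring

section Selection

variable {ι α : Type*}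

theorem exists_notMem_of_card_lt [Fintype α] {s : Finset α} (h : #s < Fintype.card α) :
    ∃ c, c ∉ s := by
  simpa using exists_mem_notMem_of_card_lt_card (t := univ) h

variable [DecidableEq α]

theorem exists_injOn_mem_of_card_le_card_add_one {S : Finset ι} {t : ι → Finset α}
    (h : ∀ i ∈ S, #S ≤ #(t i) + 1) {i₀ : ι} (hi₀ : i₀ ∈ S) (h₀ : #S ≤ #(t i₀)) :
    ∃ f : ι → α, Set.InjOn f S ∧ ∀ i ∈ S, f i ∈ t i := by
  classical
  obtain ⟨f, hf, hft⟩ := (all_card_le_biUnion_card_iff_exists_injective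
    (fun i : S => t i)).mp fun s => by
      rcases s.eq_empty_or_nonempty with rfl | ⟨i, hi⟩
      · simp
      by_cases hs : s = univ
      · subst hs
        have := card_le_card (subset_biUnion_of_mem (fun i : S => t i) (mem_univ ⟨i₀, hi₀⟩))
        simp only [card_univ, Fintype.card_coe] at this ⊢
        omega
      · have := card_le_card (subset_biUnion_of_mem (fun i : S => t i) hi)
        have hlt := (card_lt_iff_ne_univ s).mpr hs
        rw [Fintype.card_coe] at hlt
        have := h i i.2
        omega
  refine ⟨fun i => if hi : i ∈ S then f ⟨i, hi⟩ else f ⟨i₀, hi₀⟩,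
    fun i hi j hj hij => ?_, fun i hi => by simpa [hi] using hft ⟨i, hi⟩⟩
  rw [mem_coe] at hi hj
  exact congrArg Subtype.val (hf (by simpa [hi, hj] using hij))

variable [Fintype α]

def outCandidates (A B X : Finset α) (K : ℕ) : Finset α :=
  {c | c ∉ B ∧ c ∉ X ∧ #(insert c A) < K}

theorem le_card_outCandidates {A B X : Finset α} {d K q : ℕ}
    (hα : d + K ≤ Fintype.card α + 1) (hA : #A < K) (hB : #B < d) (hAB : Disjoint A B)
    (hX : #X + q ≤ K) (hAX : #(A ∩ X) + q < K) : q ≤ #(outCandidates A B X K) := by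
  by_cases hroom : #A + 1 < K
  · have hsub : (B ∪ X)ᶜ ⊆ outCandidates A B X K := fun c hc => by
      simp only [mem_compl, mem_union, not_or] at hc
      simpa [outCandidates, hc] using (card_insert_le c A).trans_lt hroom
    have := card_le_card hsub
    rw [card_compl] at this
    have := card_union_le B X
    omega
  · have hsub : A \ X ⊆ outCandidates A B X K := fun c hc => by
      rw [mem_sdiff] at hc
      simpa [outCandidates, hc.2, insert_eq_of_mem hc.1, hA] using
        disjoint_left.mp hAB hc.1
    have := card_le_card hsub
    rw [card_sdiff, inter_comm] at this
    omega

theorem exists_notMem_union_of_card_insert_lt {A B D : Finset α} {o : α} {d K : ℕ}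
    (hα : d + K ≤ Fintype.card α + 1) (hA : #(insert o A) < K) (hBD : #B + #D ≤ d)
    (ho : o ∈ D) : ∃ c, c ∉ A ∧ c ∉ B ∧ c ∉ D := by
  have hsub : A ∪ B ∪ D ⊆ (insert o A ∪ D) ∪ B := by
    intro c; simp only [mem_union, mem_insert]; tauto
  have hinter : 1 ≤ #(insert o A ∩ D) :=
    card_pos.mpr ⟨o, mem_inter.mpr ⟨mem_insert_self o A, ho⟩⟩
  have := card_union_add_card_inter (insert o A) D
  have := card_union_le (insert o A ∪ D) B
  obtain ⟨c, hc⟩ := exists_notMem_of_card_lt (s := A ∪ B ∪ D) (by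
    have := card_le_card hsub
    omega)
  simp only [mem_union, not_or] at hc
  exact ⟨c, hc.1.1, hc.1.2, hc.2⟩

theorem exists_injOn_mem_outCandidates {S : Finset ι} (hS : S.Nonempty) {A B : ι → Finset α}
    {X : Finset α} {d K : ℕ} (hα : d + K ≤ Fintype.card α + 1)
    (hA : ∀ j ∈ S, #(A j) < K) (hB : ∀ j ∈ S, #(B j) < d)
    (hAB : ∀ j ∈ S, Disjoint (A j) (B j)) (hX : #X + #S ≤ K)
    (hX₀ : ∃ j ∈ S, #(A j ∩ X) + #S < K) :
    ∃ out : ι → α, Set.InjOn out S ∧ ∀ j ∈ S, out j ∈ outCandidates (A j) (B j) X K := by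
  obtain ⟨j₀, hj₀, hj₀X⟩ := hX₀
  refine exists_injOn_mem_of_card_le_card_add_one (fun j hj => ?_) hj₀
    (le_card_outCandidates hα (hA j₀ hj₀) (hB j₀ hj₀) (hAB j₀ hj₀) hX hj₀X)
  have := hS.card_pos
  have := card_le_card (inter_subset_right (s₁ := A j) (s₂ := X))
  have := le_card_outCandidates (X := X) (q := #S - 1) hα (hA j hj) (hB j hj) (hAB j hj)
    (by omega) (by omega)
  omega

theorem exists_out_inn {S : Finset ι} (hS : S.Nonempty) {A B : ι → Finset α} {d K : ℕ}
    (hα : d + K ≤ Fintype.card α + 1) (hSK : #S < K)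
    (hA : ∀ j ∈ S, #(A j) < K) (hB : ∀ j ∈ S, #(B j) < d)
    (hAB : ∀ j ∈ S, Disjoint (A j) (B j))
    (hhigh : #{j ∈ S | d < #(B j) + #S} + #S ≤ K) :
    ∃ out inn : ι → α, Set.InjOn out S ∧ (∀ i ∈ S, ∀ j ∈ S, out i ≠ inn j) ∧
      ∀ j ∈ S, out j ∉ B j ∧ #(insert (out j) (A j)) < K ∧ inn j ∉ A j ∧ inn j ∉ B j := by
  classical
  set H := {j ∈ S | d < #(B j) + #S}
  have hHS : H ⊆ S := filter_subset _ _
  have hfree : ∀ j ∈ S, ∃ c, c ∉ A j ∧ c ∉ B j := fun j hj => by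
    obtain ⟨c, hc⟩ := exists_notMem_of_card_lt (s := A j ∪ B j) (by
      have := card_union_le (A j) (B j); have := hA j hj; have := hB j hj; omega)
    exact ⟨c, by simpa [not_or] using hc⟩
  have : Nonempty α := let ⟨j, hj⟩ := hS; let ⟨c, _⟩ := hfree j hj; ⟨c⟩
  choose! ch hch using hfree
  set X := H.image ch
  have hXH : #X ≤ #H := card_image_le
  -- `ch j` is set aside to become `inn j` for `j ∈ H`, so `out` must avoid `X`.
  obtain ⟨out, hinj, hout⟩ :=
      exists_injOn_mem_outCandidates (X := X) hS hα hA hB hAB (by omega) <| by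
    rcases H.eq_empty_or_nonempty with hH | ⟨j, hj⟩
    · obtain ⟨j, hj⟩ := hS
      exact ⟨j, hj, by simp [X, hH, hSK]⟩
    · refine ⟨j, hHS hj, ?_⟩
      have : #(A j ∩ X) < #X := card_lt_card ⟨inter_subset_right, fun h =>
        (hch j (hHS hj)).1 (mem_of_mem_inter_left (h (mem_image_of_mem ch hj)))⟩
      omega
  simp only [outCandidates, mem_filter, mem_univ, true_and] at hout
  have hinn : ∀ j ∈ S, ∃ c, c ∉ A j ∧ c ∉ B j ∧ c ∉ S.image out := fun j hj => by
    by_cases hjH : j ∈ H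
    · refine ⟨ch j, (hch j hj).1, (hch j hj).2, ?_⟩
      simp only [mem_image, not_exists, not_and]
      exact fun i hi h => (hout i hi).2.1 (h ▸ mem_image_of_mem ch hjH)
    · have := card_image_le (s := S) (f := out)
      have hlow : #(B j) + #S ≤ d := by simpa [H, hj] using hjH
      exact exists_notMem_union_of_card_insert_lt hα (hout j hj).2.2 (by omega)
        (mem_image_of_mem out hj)
  choose! inn hinn using hinn
  exact ⟨out, inn, hinj, fun i hi j hj h => (hinn j hj).2.2 (h ▸ mem_image_of_mem out hi),
    fun j hj => ⟨(hout j hj).1, (hout j hj).2.2, (hinn j hj).1, (hinn j hj).2.1⟩⟩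

end Selection

section Extension

variable {V : Type*} [DecidableEq V]

/-- `out b` colors the incidence `(u, ub)` and `inn a` colors `(a, au)`. -/
def extendAt {β : Type*} (u : V) (ψ : V → V → β) (out inn : V → β) (a b : V) : β :=
  if a = u then out b else if b = u then inn a else ψ a b

variable {n : ℕ} {G : SimpleGraph V} {u : V} {ψ : V → V → Fin n} {out inn : V → Fin n}

theorem isIncidenceColoring_extendAt (hψ : IsIncidenceColoring (G.deleteIncidenceSet u) ψ)
    (hinj : Set.InjOn out (G.neighborSet u))
    (hout_inn : ∀ v ∈ G.neighborSet u, ∀ w ∈ G.neighborSet u, out v ≠ inn w)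
    (hout : ∀ v ∈ G.neighborSet u, out v ∉ outColors (G.deleteIncidenceSet u) ψ v)
    (hinn_out : ∀ v ∈ G.neighborSet u, inn v ∉ outColors (G.deleteIncidenceSet u) ψ v)
    (hinn_in : ∀ v ∈ G.neighborSet u, inn v ∉ inColors (G.deleteIncidenceSet u) ψ v) :
    IsIncidenceColoring G (extendAt u ψ out inn) := by
  rw [isIncidenceColoring_iff] at hψ ⊢
  have hdel {a b : V} (h : G.Adj a b) (ha : a ≠ u) (hb : b ≠ u) :
      (G.deleteIncidenceSet u).Adj a b :=
    deleteIncidenceSet_adj.mpr ⟨h, ha, hb⟩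
  refine ⟨fun v a b ha hb hab => ?_, fun v a b ha hb => ?_⟩
  · by_cases hv : v = u
    · subst hv
      simpa [extendAt] using fun h => hab (hinj ha hb h)
    by_cases hau : a = u
    · subst hau
      have hbu : b ≠ a := Ne.symm hab
      simpa [extendAt, hv, hbu] using fun h => hinn_out v ha.symm ⟨b, hdel hb hv hbu, h.symm⟩
    by_cases hbu : b = u
    · subst hbu
      simpa [extendAt, hv, hau] using fun h => hinn_out v hb.symm ⟨a, hdel ha hv hau, h⟩
    simpa [extendAt, hv, hau, hbu] using hψ.1 (hdel ha hv hau) (hdel hb hv hbu) hab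
  · by_cases hv : v = u
    · subst hv
      by_cases hbv : b = v
      · subst hbv
        simpa [extendAt, ha.ne'] using hout_inn a ha a ha
      simpa [extendAt, ha.ne', hbv] using fun h => hout a ha ⟨b, hdel hb ha.ne' hbv, h.symm⟩
    by_cases hau : a = u
    · subst hau
      simpa [extendAt, hv, hb.ne'] using (hout_inn b hb v ha.symm).symm
    by_cases hbu : b = u
    · subst hbu
      simpa [extendAt, hv, hau] using fun h => hinn_in a hb.symm ⟨v, hdel ha hv hau, h⟩
    simpa [extendAt, hv, hau, hbu] using hψ.2 (hdel ha hv hau) (hdel hb hau hbu)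

theorem hasIncidenceColoring_extendAt [Finite V] {ℓ : ℕ}
    (hψ : IsIncidenceColoring (G.deleteIncidenceSet u) ψ)
    (hℓψ : ∀ v, (inColors (G.deleteIncidenceSet u) ψ v).ncard ≤ ℓ)
    (hℓu : (G.neighborSet u).ncard ≤ ℓ)
    (hℓout : ∀ v ∈ G.neighborSet u,
      (insert (out v) (inColors (G.deleteIncidenceSet u) ψ v)).ncard ≤ ℓ)
    (hinj : Set.InjOn out (G.neighborSet u))
    (hout_inn : ∀ v ∈ G.neighborSet u, ∀ w ∈ G.neighborSet u, out v ≠ inn w)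
    (hout : ∀ v ∈ G.neighborSet u, out v ∉ outColors (G.deleteIncidenceSet u) ψ v)
    (hinn_out : ∀ v ∈ G.neighborSet u, inn v ∉ outColors (G.deleteIncidenceSet u) ψ v)
    (hinn_in : ∀ v ∈ G.neighborSet u, inn v ∉ inColors (G.deleteIncidenceSet u) ψ v) :
    HasIncidenceColoring G n ℓ := by
  refine ⟨extendAt u ψ out inn,
    isIncidenceColoring_extendAt hψ hinj hout_inn hout hinn_out hinn_in, fun v => ?_⟩
  change (inColors G (extendAt u ψ out inn) v).ncard ≤ ℓ
  by_cases hv : v = u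
  · subst hv
    refine (Set.ncard_le_ncard ?_).trans
      ((Set.ncard_image_le (f := inn) (Set.toFinite _)).trans hℓu)
    rintro _ ⟨w, hw, rfl⟩
    exact ⟨w, hw.symm, by simp [extendAt, hw.ne]⟩
  have hmem : ∀ c ∈ inColors G (extendAt u ψ out inn) v,
      (G.Adj u v ∧ c = out v) ∨ c ∈ inColors (G.deleteIncidenceSet u) ψ v := by
    rintro _ ⟨w, hw, rfl⟩
    by_cases hwu : w = u
    · subst hwu
      exact Or.inl ⟨hw, by simp [extendAt]⟩
    exact Or.inr ⟨w, deleteIncidenceSet_adj.mpr ⟨hw, hwu, hv⟩, by simp [extendAt, hwu, hv]⟩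
  by_cases huv : G.Adj u v
  · exact (Set.ncard_le_ncard fun c hc => (hmem c hc).imp_left And.right).trans (hℓout v huv)
  · exact (Set.ncard_le_ncard fun c hc => (hmem c hc).resolve_left (huv ·.1)).trans (hℓψ v)

end Extension

theorem HasIncidenceColoring.of_induce_compl_singleton {V : Type*} {G : SimpleGraph V}
    [Fintype V] [DecidableRel G.Adj] {u : V} {d K : ℕ}
    (h : HasIncidenceColoring (G.induce {u}ᶜ) (d + K - 1) (K - 1)) (hΔ : G.maxDegree ≤ d)
    (hu : 0 < G.degree u) (huK : G.degree u < K)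
    (hhigh : #{v ∈ G.neighborFinset u | d + 2 ≤ G.degree v + G.degree u} + G.degree u ≤ K) :
    HasIncidenceColoring G (d + K - 1) (K - 1) := by
  classical
  obtain ⟨ψ, hψ, hℓψ⟩ := h.deleteIncidenceSet (by omega)
  have hB : ∀ v ∈ G.neighborFinset u,
      #(outColors (G.deleteIncidenceSet u) ψ v).toFinset < G.degree v := fun v hv => by
    rw [← Set.ncard_eq_toFinset_card']
    exact ncard_outColors_deleteIncidenceSet_lt ψ ((mem_neighborFinset _ _ _).mp hv)
  have hS : #(G.neighborFinset u) = G.degree u := card_neighborFinset_eq_degree G u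
  obtain ⟨out, inn, hinj, hne, hcol⟩ := exists_out_inn (S := G.neighborFinset u)
    (A := fun v => (inColors (G.deleteIncidenceSet u) ψ v).toFinset)
    (B := fun v => (outColors (G.deleteIncidenceSet u) ψ v).toFinset) (d := d) (K := K)
    (card_pos.mp (by omega)) (by rw [Fintype.card_fin]; omega) (by omega)
    (fun v _ => by
      rw [← Set.ncard_eq_toFinset_card']
      have : (inColors (G.deleteIncidenceSet u) ψ v).ncard ≤ K - 1 := hℓψ v
      omega)
    (fun v hv => (hB v hv).trans_le ((G.degree_le_maxDegree v).trans hΔ))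
    (fun v _ => Set.disjoint_toFinset.mpr (hψ.disjoint_inColors_outColors v))
    (by
      rw [hS]
      refine le_trans (Nat.add_le_add_right (card_le_card
        (monotone_filter_right _ fun v hv h => ?_)) _) hhigh
      have := hB v hv
      omega)
  simp only [coe_neighborFinset, mem_neighborFinset, Set.mem_toFinset, ← Set.toFinset_insert,
    ← Set.ncard_eq_toFinset_card'] at hinj hne hcol
  refine hasIncidenceColoring_extendAt hψ hℓψ (by rw [ncard_neighborSet_eq_degree]; omega)
    (fun v hv => ?_) hinj hne (fun v hv => (hcol v hv).1) (fun v hv => (hcol v hv).2.2.2)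
    (fun v hv => (hcol v hv).2.2.1)
  have := (hcol v hv).2.1
  omega

theorem incidence_coloring_extend_low_degree_vertex_general {V : Type*} [Fintype V]
    (G : SimpleGraph V) [DecidableRel G.Adj]
    (d k : ℕ) (α : ℝ) (hα : 0 ≤ α)
    (hΔ : G.maxDegree ≤ d) (u : V) (p : ℕ) (hpu : G.degree u = p)
    (hp1 : 1 ≤ p) (hpk : p ≤ k - 1)
    (hnb : ((((G.neighborFinset u).filter (fun w => d - k + 2 ≤ G.degree w)).card : ℝ))
        ≤ (1 + α) * (k : ℝ) - (p : ℝ))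
    (hcol : HasIncidenceColoring (G.induce ({u}ᶜ : Set V))
        (d + ⌊(1 + α) * (k : ℝ)⌋₊ - 1) (⌊(1 + α) * (k : ℝ)⌋₊ - 1)) :
    HasIncidenceColoring G (d + ⌊(1 + α) * (k : ℝ)⌋₊ - 1) (⌊(1 + α) * (k : ℝ)⌋₊ - 1) := by
  have hkK : k ≤ ⌊(1 + α) * (k : ℝ)⌋₊ := Nat.le_floor (by nlinarith)
  have hpd : p ≤ d := hpu ▸ (G.degree_le_maxDegree u).trans hΔ
  refine hcol.of_induce_compl_singleton hΔ (by omega) (by omega) (Nat.le_floor ?_)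
  have hsub := card_le_card (monotone_filter_right (G.neighborFinset u)
    (p := fun v => d + 2 ≤ G.degree v + G.degree u) (q := fun w => d - k + 2 ≤ G.degree w)
    fun w _ h => by omega)
  rw [hpu] at hsub ⊢
  push_cast
  have : (#{v ∈ G.neighborFinset u | d + 2 ≤ G.degree v + p} : ℝ) ≤ _ := Nat.cast_le.mpr hsub
  linarith

theorem incidence_coloring_extend_low_degree_vertex {V : Type*} [Fintype V] [DecidableEq V]
    (G : SimpleGraph V) [DecidableRel G.Adj]
    (d k : ℕ) (hd : 0 < d) (hk : 0 < k) (α : ℝ) (hα : 0 ≤ α)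
    (hΔ : G.maxDegree ≤ d) (u : V) (p : ℕ) (hpu : G.degree u = p)
    (hp1 : 1 ≤ p) (hpk : p ≤ k - 1)
    (hnb : ((((G.neighborFinset u).filter (fun w => d - k + 2 ≤ G.degree w)).card : ℝ))
        ≤ (1 + α) * (k : ℝ) - (p : ℝ))
    (hcol : HasIncidenceColoring (G.induce ({u}ᶜ : Set V))
        (d + ⌊(1 + α) * (k : ℝ)⌋₊ - 1) (⌊(1 + α) * (k : ℝ)⌋₊ - 1)) :
    HasIncidenceColoring G (d + ⌊(1 + α) * (k : ℝ)⌋₊ - 1) (⌊(1 + α) * (k : ℝ)⌋₊ - 1) :=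
  incidence_coloring_extend_low_degree_vertex_general G d k α hα hΔ u p hpu hp1 hpk hnb hcol
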